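/- Let n, m be natural numbers with m ≥ 2 and n ≥ 2m−1, and let β be an m-cycle in S_n. Then the number of permutations α ∈ S_n that (2m−1)-commute with β equals m·(n−m)!·m!·C(n−m, m−1), where C(a,b) denotes the binomial coefficient. -/

import Mathlib

open Finset Equiv

/-- The Hamming metric between two permutations of `Fin n`. -/
def hamming {n : ℕ} (f g : Equiv.Perm (Fin n)) : ℕ :=
  (Finset.univ.filter fun a : Fin n => f a ≠ g a).card

/-- `kcomm k β` is the number of permutations `α` that `k`-commute with `β`,
i.e. with `H(αβ, βα) = k`. -/
def kcomm {n : ℕ} (k : ℕ) (β : Equiv.Perm (Fin n)) : ℕ :=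
  (Finset.univ.filter fun α : Equiv.Perm (Fin n) =>
    hamming (α * β) (β * α) = k).card

variable {n : ℕ}
lemma hamming_conj (α β : Equiv.Perm (Fin n)) :
    hamming (α * β) (β * α) = hamming (α * β * α⁻¹) β := by
  unfold hamming
  apply Finset.card_bij' (fun a _ => α a) (fun b _ => α⁻¹ b)
  · intro a ha
    rw [Finset.mem_filter] at ha ⊢
    simp only [mem_filter, mem_univ, true_and, Perm.mul_apply] at ha ⊢
    simpa using ha
  · intro b hb
    rw [Finset.mem_filter] at hb ⊢
    simp only [mem_filter, mem_univ, true_and, Perm.mul_apply] at hb ⊢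
    simpa using hb
  · intro a _; simp
  · intro b _; simp

lemma diff_eq_union (σ τ : Equiv.Perm (Fin n))
    (h : (σ.support ∩ τ.support).card ≤ 1) :
    (Finset.univ.filter fun a : Fin n => σ a ≠ τ a) = σ.support ∪ τ.support := by
  ext a
  simp only [mem_filter, mem_univ, true_and, mem_union, Equiv.Perm.mem_support]
  constructor
  · intro hne
    by_contra hc
    push_neg at hc
    exact hne (hc.1.trans hc.2.symm)
  · rintro (ha | ha) heq
    · have hta : τ a ≠ a := fun h' => ha (heq.trans h')
      have hy1 : σ (σ a) ≠ σ a := fun h' => ha (σ.injective h')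
      have hy2 : τ (σ a) ≠ σ a := by
        rw [heq]; exact fun h' => hta (τ.injective h')
      have h2 : 1 < (σ.support ∩ τ.support).card := by
        exact Finset.one_lt_card.2 ⟨a, Finset.mem_inter.2 ⟨Equiv.Perm.mem_support.2 ha,
          Equiv.Perm.mem_support.2 hta⟩, σ a, Finset.mem_inter.2 ⟨Equiv.Perm.mem_support.2 hy1,
          Equiv.Perm.mem_support.2 hy2⟩, fun h' => ha h'.symm⟩
      omega
    · have hsa : σ a ≠ a := fun h' => ha (heq.symm.trans h')
      have hy1 : τ (τ a) ≠ τ a := fun h' => ha (τ.injective h')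
      have hy2 : σ (τ a) ≠ τ a := by
        rw [← heq]; exact fun h' => hsa (σ.injective h')
      have h2 : 1 < (σ.support ∩ τ.support).card := by
        exact Finset.one_lt_card.2 ⟨a, Finset.mem_inter.2 ⟨Equiv.Perm.mem_support.2 hsa,
          Equiv.Perm.mem_support.2 ha⟩, τ a, Finset.mem_inter.2 ⟨Equiv.Perm.mem_support.2 hy2,
          Equiv.Perm.mem_support.2 hy1⟩, fun h' => ha h'.symm⟩
      omega
lemma hamming_le (σ τ : Equiv.Perm (Fin n)) :
    hamming σ τ ≤ (σ.support ∪ τ.support).card := by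
  apply Finset.card_le_card
  intro a ha
  simp only [mem_filter, mem_univ, true_and] at ha
  by_contra hc
  simp only [mem_union, Equiv.Perm.mem_support, not_or, not_not] at hc
  exact ha (hc.1.trans hc.2.symm)

lemma hamming_eq_iff {m : ℕ} (hm : 2 ≤ m) (σ τ : Equiv.Perm (Fin n))
    (hσ : σ.support.card = m) (hτ : τ.support.card = m) :
    hamming σ τ = 2 * m - 1 ↔ (σ.support ∩ τ.support).card = 1 := by
  have hu : (σ.support ∪ τ.support).card + (σ.support ∩ τ.support).card = m + m :=
    by rw [Finset.card_union_add_card_inter, hσ, hτ]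
  rcases le_or_gt (σ.support ∩ τ.support).card 1 with ht | ht
  · have heq : hamming σ τ = (σ.support ∪ τ.support).card := by
      unfold hamming; rw [diff_eq_union σ τ ht]
    omega
  · have := hamming_le σ τ
    omega
lemma stab_card (S : Finset (Fin n)) :
    (Finset.univ.filter fun γ : Equiv.Perm (Fin n) => S.image γ = S).card
      = S.card.factorial * (n - S.card).factorial := by
  classical
  have himg : (Finset.univ.filter fun γ : Equiv.Perm (Fin n) => S.image γ = S) =
      Finset.univ.image (fun pq : Perm {x : Fin n // x ∈ S} × Perm {x : Fin n // ¬ x ∈ S} =>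
        Equiv.Perm.subtypeCongr pq.1 pq.2) := by
    ext γ
    simp only [mem_filter, mem_univ, true_and, Finset.mem_image]
    constructor
    · intro hγ
      have key : ∀ x : Fin n, x ∈ S ↔ γ x ∈ S := by
        intro x
        constructor
        · intro hx; rw [← hγ]; exact Finset.mem_image_of_mem _ hx
        · intro hx
          rw [← hγ] at hx
          obtain ⟨y, hy, hyx⟩ := Finset.mem_image.1 hx
          rwa [← γ.injective hyx]
      refine ⟨⟨γ.subtypePerm (fun x => (key x).symm), γ.subtypePerm (fun x => not_congr (key x).symm)⟩, ?_⟩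
      ext x
      rcases em (x ∈ S) with hx | hx
      · rw [Equiv.Perm.subtypeCongr.left_apply _ _ hx]; rfl
      · rw [Equiv.Perm.subtypeCongr.right_apply _ _ hx]; rfl
    · rintro ⟨⟨ep, en⟩, rfl⟩
      apply Finset.eq_of_subset_of_card_le
      · intro y hy
        obtain ⟨x, hx, rfl⟩ := Finset.mem_image.1 hy
        rw [Equiv.Perm.subtypeCongr.left_apply _ _ hx]
        exact (ep ⟨x, hx⟩).2
      · rw [Finset.card_image_of_injective _ (Equiv.injective _)]
  rw [himg, Finset.card_image_of_injective _ ?_, Finset.card_univ, Fintype.card_prod,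
    Fintype.card_perm, Fintype.card_perm, Fintype.card_coe, Fintype.card_subtype_compl,
    Fintype.card_fin, Fintype.card_coe]
  have := Equiv.Perm.subtypeCongrHom_injective (fun x : Fin n => x ∈ S)
  exact this
lemma coset_card (S T : Finset (Fin n)) (h : S.card = T.card) :
    (Finset.univ.filter fun γ : Equiv.Perm (Fin n) => S.image γ = T).card
      = (Finset.univ.filter fun γ : Equiv.Perm (Fin n) => S.image γ = S).card := by
  classical
  obtain ⟨α₀, hα₀⟩ : ∃ α₀ : Equiv.Perm (Fin n), S.image α₀ = T := by
    have e : {x : Fin n // x ∈ S} ≃ {x : Fin n // x ∈ T} := Finset.equivOfCardEq h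
    refine ⟨e.extendSubtype, Finset.eq_of_subset_of_card_le ?_ ?_⟩
    · intro y hy
      obtain ⟨x, hx, rfl⟩ := Finset.mem_image.1 hy
      exact e.extendSubtype_mem x hx
    · rw [Finset.card_image_of_injective _ (Equiv.injective _), h]
  apply Finset.card_bij' (fun γ _ => α₀⁻¹ * γ) (fun δ _ => α₀ * δ)
  · intro γ hγ
    simp only [mem_filter, mem_univ, true_and] at hγ ⊢
    rw [show ⇑(α₀⁻¹ * γ) = ⇑α₀⁻¹ ∘ ⇑γ from rfl, ← Finset.image_image, hγ, ← hα₀,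
      Finset.image_image]
    have : (⇑α₀⁻¹ ∘ ⇑α₀) = id := by ext x; simp
    rw [this, Finset.image_id]
  · intro δ hδ
    simp only [mem_filter, mem_univ, true_and] at hδ ⊢
    rw [show ⇑(α₀ * δ) = ⇑α₀ ∘ ⇑δ from rfl, ← Finset.image_image, hδ, hα₀]
  · intro γ _; simp [← mul_assoc]
  · intro δ _; simp [← mul_assoc]

lemma Tcount (S : Finset (Fin n)) {m : ℕ} (hm : 1 ≤ m) (hS : S.card = m) :
    (Finset.univ.filter fun T : Finset (Fin n) => (T ∩ S).card = 1 ∧ T.card = m).card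
      = m * Nat.choose (n - m) (m - 1) := by
  classical
  have key : (Finset.univ.filter fun T : Finset (Fin n) => (T ∩ S).card = 1 ∧ T.card = m).card
      = (S ×ˢ (Sᶜ.powersetCard (m - 1))).card := by
    symm
    apply Finset.card_bij (fun p _ => insert p.1 p.2)
    · rintro ⟨x, A⟩ hp
      simp only [Finset.mem_product, Finset.mem_powersetCard] at hp
      have hx := hp.1
      have hAsub := hp.2.1
      have hAcard := hp.2.2
      have hxA : x ∉ A := fun hxa => (Finset.mem_compl.1 (hAsub hxa)) hx
      have hinter : (insert x A) ∩ S = {x} := by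
        ext y
        simp only [Finset.mem_inter, Finset.mem_insert, Finset.mem_singleton]
        constructor
        · rintro ⟨hy1 | hy1, hy2⟩
          · exact hy1
          · exact absurd hy2 (Finset.mem_compl.1 (hAsub hy1))
        · rintro rfl; exact ⟨Or.inl rfl, hx⟩
      simp only [mem_filter, mem_univ, true_and]
      refine ⟨by rw [hinter, Finset.card_singleton], ?_⟩
      rw [Finset.card_insert_of_notMem hxA, hAcard]
      omega
    · rintro ⟨x, A⟩ hp ⟨y, B⟩ hq hins
      simp only [Finset.mem_product, Finset.mem_powersetCard] at hp hq
      have hxA : x ∉ A := fun hxa => (Finset.mem_compl.1 (hp.2.1 hxa)) hp.1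
      have hyB : y ∉ B := fun hxa => (Finset.mem_compl.1 (hq.2.1 hxa)) hq.1
      have hxy : x = y := by
        have : x ∈ insert y B := hins ▸ Finset.mem_insert_self x A
        rcases Finset.mem_insert.1 this with h | h
        · exact h
        · exact absurd hp.1 (Finset.mem_compl.1 (hq.2.1 h))
      subst hxy
      have : A = B := by
        rw [← Finset.erase_insert hxA, hins, Finset.erase_insert hyB]
      simp [this]
    · intro T hT
      simp only [mem_filter, mem_univ, true_and] at hT
      obtain ⟨x, hx⟩ := Finset.card_eq_one.1 hT.1
      have hxS : x ∈ S := (Finset.mem_inter.1 (hx ▸ Finset.mem_singleton_self x)).2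
      have hxT : x ∈ T := (Finset.mem_inter.1 (hx ▸ Finset.mem_singleton_self x)).1
      refine ⟨⟨x, T \ S⟩, Finset.mem_product.2 ⟨hxS, Finset.mem_powersetCard.2
        ⟨fun y hy => Finset.mem_compl.2 (Finset.mem_sdiff.1 hy).2, ?_⟩⟩, ?_⟩
      · show (T \ S).card = m - 1
        have h1 := Finset.card_sdiff_add_card_inter T S
        have h2 := hT.1
        have h3 := hT.2
        omega
      · ext y
        simp only [Finset.mem_insert, Finset.mem_sdiff]
        constructor
        · rintro (rfl | ⟨hy, _⟩)
          · exact hxT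
          · exact hy
        · intro hy
          by_cases hyS : y ∈ S
          · left
            have : y ∈ T ∩ S := Finset.mem_inter.2 ⟨hy, hyS⟩
            rwa [hx, Finset.mem_singleton] at this
          · exact Or.inr ⟨hy, hyS⟩
  rw [key, Finset.card_product, hS, Finset.card_powersetCard, Finset.card_compl,
    Fintype.card_fin, hS]
lemma main_count (S : Finset (Fin n)) {m : ℕ} (hm : 1 ≤ m) (hS : S.card = m) :
    (Finset.univ.filter fun α : Equiv.Perm (Fin n) => ((S.image α) ∩ S).card = 1).card
      = m * Nat.factorial (n - m) * Nat.factorial m * Nat.choose (n - m) (m - 1) := by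
  classical
  set 𝒯 := Finset.univ.filter fun T : Finset (Fin n) => (T ∩ S).card = 1 ∧ T.card = m with h𝒯
  rw [Finset.card_eq_sum_card_fiberwise (f := fun α : Equiv.Perm (Fin n) => S.image ⇑α)
    (t := 𝒯) ?_]
  · have hfib : ∀ T ∈ 𝒯,
        ((Finset.univ.filter fun α : Equiv.Perm (Fin n) => ((S.image α) ∩ S).card = 1).filter
          (fun α : Equiv.Perm (Fin n) => S.image ⇑α = T)).card = Nat.factorial m * Nat.factorial (n - m) := by
      intro T hT
      simp only [h𝒯, mem_filter, mem_univ, true_and] at hT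
      have : ((Finset.univ.filter fun α : Equiv.Perm (Fin n) => ((S.image α) ∩ S).card = 1).filter
          (fun α : Equiv.Perm (Fin n) => S.image ⇑α = T)) = Finset.univ.filter
            (fun α : Equiv.Perm (Fin n) => S.image ⇑α = T) := by
        rw [Finset.filter_filter]
        apply Finset.filter_congr
        intro α _
        constructor
        · exact And.right
        · intro h; exact ⟨by rw [h]; exact hT.1, h⟩
      rw [this, coset_card S T (hS.trans hT.2.symm), stab_card, hS]
    rw [Finset.sum_congr rfl hfib, Finset.sum_const, smul_eq_mul, Tcount S hm hS]
    ring
  · intro α hα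
    simp only [Finset.coe_filter, Finset.mem_filter, Finset.mem_univ, true_and, Set.mem_setOf_eq] at hα
    simp only [h𝒯, Finset.coe_filter, Finset.mem_filter, Finset.mem_univ, true_and, Set.mem_setOf_eq]
    exact ⟨hα, by rw [Finset.card_image_of_injective _ (Equiv.injective _), hS]⟩

theorem c_2m_sub_one_of_m_cycle (n m : ℕ) (hm : 2 ≤ m) (hn : 2 * m - 1 ≤ n)
    (β : Equiv.Perm (Fin n)) (hβ : β.IsCycle ∧ β.support.card = m) :
    kcomm (2 * m - 1) β =
      m * Nat.factorial (n - m) * Nat.factorial m * Nat.choose (n - m) (m - 1) := by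
  classical
  have hS : β.support.card = m := hβ.2
  have hm1 : 1 ≤ m := le_trans one_le_two hm
  unfold kcomm
  have hfilter : (Finset.univ.filter fun α : Equiv.Perm (Fin n) =>
      hamming (α * β) (β * α) = 2 * m - 1)
      = Finset.univ.filter (fun α : Equiv.Perm (Fin n) =>
          ((β.support.image ⇑α) ∩ β.support).card = 1) := by
    apply Finset.filter_congr
    intro α _
    rw [hamming_conj]
    have hc : (α * β * α⁻¹).support.card = m := by
      rw [Equiv.Perm.card_support_conj]; exact hS
    rw [hamming_eq_iff hm _ _ hc hS, Equiv.Perm.support_conj, Finset.map_eq_image]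
    simp
  rw [hfilter]
  exact main_count β.support hm1 hS
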